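/- arXiv:2005.07423 — 8 statements merged into one kernel-verified Lean document; each statement's English description precedes it below -/
import Mathlib

section
/- Let ε ∈ (0, 1/6) and n > 0 be real numbers, let q ∈ [0, n], and let s be a real number with 0 ≤ s ≤ 2√(3ε)·n/(1 + 6ε). Then (3(1 + 6ε)/(4n))·q² − ((1 + 6ε)/2)·q + ((5 + 6ε)/12)·n − ((1 + 6ε)/(4n))·s² ≥ (1 − 3ε)·n/(3(1 + 6ε)). -/
/-- Expectation core of the lemma guaranteeing many undecided agents while
the bias is below βn, with β = 2√(3ε)/(1+6ε). -/
theorem enough_undecided_expectation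
    (ε n q s : ℝ) (hε0 : 0 < ε) (hε1 : ε < 1 / 6) (hn : 0 < n)
    (hq0 : 0 ≤ q) (hq1 : q ≤ n)
    (hs0 : 0 ≤ s) (hs1 : s ≤ 2 * Real.sqrt (3 * ε) * n / (1 + 6 * ε)) :
    (3 * (1 + 6 * ε) / (4 * n)) * q ^ 2 - ((1 + 6 * ε) / 2) * q
        + ((5 + 6 * ε) / 12) * n - ((1 + 6 * ε) / (4 * n)) * s ^ 2
      ≥ (1 - 3 * ε) * n / (3 * (1 + 6 * ε)) := by
  have ha : (0:ℝ) < 1 + 6 * ε := by linarith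
  have hr2 : Real.sqrt (3 * ε) ^ 2 = 3 * ε := Real.sq_sqrt (by linarith)
  have hrn : 0 ≤ Real.sqrt (3 * ε) := Real.sqrt_nonneg _
  have hs1' : s * (1 + 6 * ε) ≤ 2 * Real.sqrt (3 * ε) * n :=
    (le_div_iff₀ ha).mp hs1
  have hs2 : s ^ 2 * (1 + 6 * ε) ^ 2 ≤ 12 * ε * n ^ 2 := by
    nlinarith [mul_le_mul hs1' hs1' (by positivity) (by positivity), hr2]
  have key : 0 ≤ 3 * (1 + 6 * ε) * q ^ 2 - 2 * n * (1 + 6 * ε) * q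
      + (1 + 6 * ε) * n ^ 2 / 3 := by
    nlinarith [sq_nonneg (3 * q - n), ha.le]
  have hn' : n ≠ 0 := ne_of_gt hn
  rw [ge_iff_le, div_le_iff₀ (by positivity : (0:ℝ) < 3 * (1 + 6 * ε)),
    ← sub_nonneg]
  have hexpand : (3 * (1 + 6 * ε) / (4 * n) * q ^ 2 - (1 + 6 * ε) / 2 * q
      + (5 + 6 * ε) / 12 * n - (1 + 6 * ε) / (4 * n) * s ^ 2) * (3 * (1 + 6 * ε))
      - (1 - 3 * ε) * n
      = (3 * ((3 * (1 + 6 * ε)) * (3 * (1 + 6 * ε) * q ^ 2 - 2 * n * (1 + 6 * ε) * q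
          + (1 + 6 * ε) * n ^ 2 / 3)
        + 3 * (12 * ε * n ^ 2 - s ^ 2 * (1 + 6 * ε) ^ 2))) / (12 * n) := by
    field_simp
    ring
  rw [hexpand]
  apply div_nonneg _ (by positivity)
  have h1 : 0 ≤ 12 * ε * n ^ 2 - s ^ 2 * (1 + 6 * ε) ^ 2 := by linarith
  positivity
end

section
/- Let ε ∈ (0, 1/6) and n > 0 be real numbers, let q ∈ [0, n], and let s be a real number with 0 ≤ s ≤ n − q. Then (3(1 + 6ε)/(4n))·q² − ((1 + 6ε)/2)·q + ((5 + 6ε)/12)·n − ((1 + 6ε)/(4n))·s² ≥ ((1 + 6ε)/(2n))·q² + ((1 − 6ε)/6)·n; in particular the left-hand side is at least (1 − 6ε)·n/6. -/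
/-- Expectation core of the unconditional lower bound on the number of
undecided agents (p = 1/6 − ε): the expectation is at least
((1+6ε)/(2n))q² + ((1−6ε)/6)n, hence at least (1−6ε)n/6. -/
theorem undecided_lower_bound_expectation
    (ε n q s : ℝ) (hε0 : 0 < ε) (hε1 : ε < 1 / 6) (hn : 0 < n)
    (hq0 : 0 ≤ q) (hq1 : q ≤ n) (hs0 : 0 ≤ s) (hs1 : s ≤ n - q) :
    (3 * (1 + 6 * ε) / (4 * n)) * q ^ 2 - ((1 + 6 * ε) / 2) * q
        + ((5 + 6 * ε) / 12) * n - ((1 + 6 * ε) / (4 * n)) * s ^ 2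
      ≥ ((1 + 6 * ε) / (2 * n)) * q ^ 2 + ((1 - 6 * ε) / 6) * n
    ∧ (3 * (1 + 6 * ε) / (4 * n)) * q ^ 2 - ((1 + 6 * ε) / 2) * q
        + ((5 + 6 * ε) / 12) * n - ((1 + 6 * ε) / (4 * n)) * s ^ 2
      ≥ (1 - 6 * ε) * n / 6 := by
  have hn' : n ≠ 0 := ne_of_gt hn
  have hs2 : s ^ 2 ≤ (n - q) ^ 2 := by nlinarith
  have key : (3 * (1 + 6 * ε) / (4 * n)) * q ^ 2 - ((1 + 6 * ε) / 2) * q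
        + ((5 + 6 * ε) / 12) * n - ((1 + 6 * ε) / (4 * n)) * s ^ 2
      - (((1 + 6 * ε) / (2 * n)) * q ^ 2 + ((1 - 6 * ε) / 6) * n)
      = ((1 + 6 * ε) / (4 * n)) * ((n - q) ^ 2 - s ^ 2) := by
    field_simp
    ring
  have hpos : 0 ≤ ((1 + 6 * ε) / (4 * n)) * ((n - q) ^ 2 - s ^ 2) := by
    apply mul_nonneg (by positivity) (by linarith)
  have h1 : (3 * (1 + 6 * ε) / (4 * n)) * q ^ 2 - ((1 + 6 * ε) / 2) * q
        + ((5 + 6 * ε) / 12) * n - ((1 + 6 * ε) / (4 * n)) * s ^ 2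
      ≥ ((1 + 6 * ε) / (2 * n)) * q ^ 2 + ((1 - 6 * ε) / 6) * n := by linarith
  have h2 : 0 ≤ ((1 + 6 * ε) / (2 * n)) * q ^ 2 := by positivity
  exact ⟨h1, by linarith⟩
end

section
/- Let ε ∈ (0, 1/6) and n > 0 be real numbers, let a, b, q ≥ 0 with a + b + q = n and q ≥ (1 − 6ε)·n/12, and set p = 1/6 − ε. Then (b/n)·(b + 2q)·(1 − 2p) + (b·(a + b) + (a + q)·(b + q))·p/n ≥ (1 − 6ε)·q²/(6n) ≥ (1 − 6ε)³·n/864. -/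
/-- Expectation core of the lemma guaranteeing linear support for the
minority opinion Beta when there are many undecided agents (p = 1/6 − ε). -/
theorem minority_support_expectation
    (ε n a b q p : ℝ) (hε0 : 0 < ε) (hε1 : ε < 1 / 6) (hn : 0 < n)
    (ha : 0 ≤ a) (hb : 0 ≤ b) (hq : 0 ≤ q) (hsum : a + b + q = n)
    (hqlb : q ≥ (1 - 6 * ε) * n / 12) (hp : p = 1 / 6 - ε) :
    (b / n) * (b + 2 * q) * (1 - 2 * p)
        + (b * (a + b) + (a + q) * (b + q)) * p / n
      ≥ (1 - 6 * ε) * q ^ 2 / (6 * n)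
    ∧ (1 - 6 * ε) * q ^ 2 / (6 * n) ≥ (1 - 6 * ε) ^ 3 * n / 864 := by
  have hf : 0 < 1 - 6 * ε := by linarith
  subst hp
  constructor
  · rw [ge_iff_le, div_le_iff₀ (by positivity : (0:ℝ) < 6 * n)]
    have h : (b / n) * (b + 2 * q) * (1 - 2 * (1 / 6 - ε))
        + (b * (a + b) + (a + q) * (b + q)) * (1 / 6 - ε) / n
        = (b * (b + 2 * q) * (1 - 2 * (1 / 6 - ε))
          + (b * (a + b) + (a + q) * (b + q)) * (1 / 6 - ε)) / n := by
      field_simp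
    rw [h, div_mul_eq_mul_div, le_div_iff₀ hn]
    have h1 : 0 ≤ b * (b + 2 * q) * (1 - 2 * (1 / 6 - ε)) :=
      mul_nonneg (mul_nonneg hb (by linarith)) (by linarith)
    nlinarith [mul_nonneg (mul_nonneg (mul_nonneg ha hb) hf.le) hn.le,
      mul_nonneg (mul_nonneg (mul_nonneg ha hq) hf.le) hn.le,
      mul_nonneg (mul_nonneg (mul_nonneg hb hq) hf.le) hn.le,
      mul_nonneg (mul_nonneg (mul_nonneg hb (add_nonneg ha hb)) hf.le) hn.le,
      mul_nonneg h1 hn.le]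
  · rw [ge_iff_le, div_le_div_iff₀ (by norm_num) (by positivity)]
    nlinarith [sq_nonneg (12 * q - (1 - 6 * ε) * n), mul_pos hf hn,
      mul_le_mul_of_nonneg_left hqlb (le_of_lt hf)]
end

section
/- Let ε ∈ (0, 1/12] and n > 0 be real numbers, let s be a real number with 0 ≤ s ≤ (2/3)·n, and let q be a real number with 0 ≤ q ≤ n − s. Then s·(5/6 − ε + (1 − 6ε)·q/(2n)) ≤ (2/3)·(1 − 2ε)·n. -/
/-!
The expected bias grows with the number `q` of undecided agents, so the worst case is `q = n - s`.
There, `2n` times the gap to `(2/3)(1 - 2ε)n` factors as `(2n/3 - s) * (2(1 - 2ε)n - (1 - 6ε)s)`,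
a product of two nonnegative terms once `s ≤ 2n/3` and `ε ≤ 1/6`; equality holds at `s = 2n/3`.
-/

/-- Equation (8): the one-step expectation of the bias `s` in a configuration with `q` undecided
agents, under communication noise `p = 1/6 + ε`. -/
noncomputable def expectedBias (ε n q s : ℝ) : ℝ :=
  s * (5 / 6 - ε + (1 - 6 * ε) * q / (2 * n))

section

variable {ε n q s : ℝ}

lemma expectedBias_mono_undecided {q' : ℝ} (hε : ε ≤ 1 / 6) (hn : 0 ≤ n) (hs : 0 ≤ s)
    (hq : q ≤ q') : expectedBias ε n q s ≤ expectedBias ε n q' s := by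
  unfold expectedBias
  have hε' : 0 ≤ 1 - 6 * ε := by linarith
  gcongr

lemma expectedBias_gap_at_max_undecided (hn : n ≠ 0) :
    2 / 3 * (1 - 2 * ε) * n - expectedBias ε n (n - s) s
      = (2 * n / 3 - s) * (2 * (1 - 2 * ε) * n - (1 - 6 * ε) * s) / (2 * n) := by
  unfold expectedBias
  field_simp
  ring

lemma expectedBias_at_max_undecided_le (hε : ε ≤ 1 / 6) (hn : 0 < n)
    (hs : s ≤ 2 / 3 * n) : expectedBias ε n (n - s) s ≤ 2 / 3 * (1 - 2 * ε) * n := by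
  have hfactor : 0 ≤ 2 * (1 - 2 * ε) * n - (1 - 6 * ε) * s := by
    nlinarith [mul_le_mul_of_nonneg_left hs (by linarith : (0 : ℝ) ≤ 1 - 6 * ε)]
  rw [← sub_nonneg, expectedBias_gap_at_max_undecided hn.ne']
  have hslack : 0 ≤ 2 * n / 3 - s := by linarith
  positivity

end

theorem bias_control_part_two_general
    (ε n q s : ℝ) (hε1 : ε ≤ 1 / 12) (hn : 0 < n)
    (hs0 : 0 ≤ s) (hs1 : s ≤ (2 / 3) * n) (hq1 : q ≤ n - s) :
    s * (5 / 6 - ε + (1 - 6 * ε) * q / (2 * n)) ≤ (2 / 3) * (1 - 2 * ε) * n := by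
  have hε : ε ≤ 1 / 6 := by linarith
  calc expectedBias ε n q s
      ≤ expectedBias ε n (n - s) s := expectedBias_mono_undecided hε hn.le hs0 hq1
    _ ≤ 2 / 3 * (1 - 2 * ε) * n := expectedBias_at_max_undecided_le hε hn hs1

/-- Expectation core of the second part of the bias-control lemma
(p = 1/6 + ε, ε ≤ 1/12): a bias at most (2/3)n cannot grow above
(2/3)(1 − 2ε)n in expectation. -/
theorem bias_control_part_two
    (ε n q s : ℝ) (hε0 : 0 < ε) (hε1 : ε ≤ 1 / 12) (hn : 0 < n)
    (hs0 : 0 ≤ s) (hs1 : s ≤ (2 / 3) * n) (hq0 : 0 ≤ q) (hq1 : q ≤ n - s) :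
    s * (5 / 6 - ε + (1 - 6 * ε) * q / (2 * n)) ≤ (2 / 3) * (1 - 2 * ε) * n :=
  bias_control_part_two_general ε n q s hε1 hn hs0 hs1 hq1
end

section
/- Let ε ∈ (0, 1/12] and n > 0 be real numbers, let q be a real number with n/(3(1 − 6ε)) ≤ q ≤ n, and let s be a real number with 0 ≤ s ≤ (2/3)·n. Then (3(1 − 6ε)/(4n))·q² − ((1 − 6ε)/2)·q + ((5 − 6ε)/12)·n − ((1 − 6ε)/(4n))·s² ≥ (1 + 14ε)·n/12. -/
theorem expected_undecided_sub_eq (ε n q s : ℝ) (hn : n ≠ 0) :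
    (3 * (1 - 6 * ε) / (4 * n)) * q ^ 2 - ((1 - 6 * ε) / 2) * q
        + ((5 - 6 * ε) / 12) * n - ((1 - 6 * ε) / (4 * n)) * s ^ 2 - (1 + 14 * ε) * n / 12
      = (3 * (1 - 6 * ε) * (q - n / 3) ^ 2 + (1 - 6 * ε) * ((2 / 3 * n) ^ 2 - s ^ 2)) / (4 * n)
        + (5 - 18 * ε) * n / 36 := by
  field_simp
  ring

theorem undecided_lower_bound_many_undecided_general
    (ε n q s : ℝ) (hε1 : ε ≤ 1 / 12) (hn : 0 < n)
    (hs0 : 0 ≤ s) (hs1 : s ≤ (2 / 3) * n) :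
    (3 * (1 - 6 * ε) / (4 * n)) * q ^ 2 - ((1 - 6 * ε) / 2) * q
        + ((5 - 6 * ε) / 12) * n - ((1 - 6 * ε) / (4 * n)) * s ^ 2
      ≥ (1 + 14 * ε) * n / 12 := by
  have hc : 0 ≤ 1 - 6 * ε := by linarith
  have hs : 0 ≤ (2 / 3 * n) ^ 2 - s ^ 2 := sub_nonneg.mpr (pow_le_pow_left₀ hs0 hs1 2)
  have hslack : 0 ≤ 5 - 18 * ε := by linarith
  rw [ge_iff_le, ← sub_nonneg, expected_undecided_sub_eq ε n q s hn.ne']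
  positivity

/-- Expectation core of the second item of the lemma controlling the
undecided agents when their number exceeds n/(3(1−6ε)) and the bias is at
most (2/3)n (p = 1/6 + ε). -/
theorem undecided_lower_bound_many_undecided
    (ε n q s : ℝ) (hε0 : 0 < ε) (hε1 : ε ≤ 1 / 12) (hn : 0 < n)
    (hq0 : n / (3 * (1 - 6 * ε)) ≤ q) (hq1 : q ≤ n)
    (hs0 : 0 ≤ s) (hs1 : s ≤ (2 / 3) * n) :
    (3 * (1 - 6 * ε) / (4 * n)) * q ^ 2 - ((1 - 6 * ε) / 2) * q
        + ((5 - 6 * ε) / 12) * n - ((1 - 6 * ε) / (4 * n)) * s ^ 2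
      ≥ (1 + 14 * ε) * n / 12 :=
  undecided_lower_bound_many_undecided_general ε n q s hε1 hn hs0 hs1
end

section
/- Let ε ∈ (0, 1/6) and n > 0 be real numbers, and let q be a real number with (1 − 4ε)·n/(3(1 + 6ε)) ≤ q ≤ n/2. Then ((1 − 6ε)/6)·n + ((1 + 6ε)/(4n))·(2q² + (n − q)²) ≤ max( (1 + 4ε + (14/3)ε²)·n/(2(1 + 6ε)), (17 + 6ε)·n/48 ), and this maximum is strictly less than n/2. -/
/-- Expectation core of the symmetry-breaking lemma keeping the number of
undecided agents in the interval [(1−4ε)n/(3(1+6ε)), n/2] (p = 1/6 − ε). -/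
theorem symmetry_breaking_undecided_upper
    (ε n q : ℝ) (hε0 : 0 < ε) (hε1 : ε < 1 / 6) (hn : 0 < n)
    (hq0 : (1 - 4 * ε) * n / (3 * (1 + 6 * ε)) ≤ q) (hq1 : q ≤ n / 2) :
    ((1 - 6 * ε) / 6) * n + ((1 + 6 * ε) / (4 * n)) * (2 * q ^ 2 + (n - q) ^ 2)
      ≤ max ((1 + 4 * ε + (14 / 3) * ε ^ 2) * n / (2 * (1 + 6 * ε)))
            ((17 + 6 * ε) * n / 48)
    ∧ max ((1 + 4 * ε + (14 / 3) * ε ^ 2) * n / (2 * (1 + 6 * ε)))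
          ((17 + 6 * ε) * n / 48)
      < n / 2 := by
  have h6 : (0:ℝ) < 1 + 6 * ε := by linarith
  have h6n : (1 + 6 * ε) ≠ 0 := ne_of_gt h6
  have hnn : n ≠ 0 := ne_of_gt hn
  have h1 : (1 - 4 * ε) * n ≤ 3 * (1 + 6 * ε) * q := by
    rw [div_le_iff₀ (by linarith)] at hq0; linarith
  constructor
  · rcases le_or_gt q (n / 3) with hc | hc
    · refine le_trans ?_ (le_max_left _ _)
      rw [← sub_nonneg]
      have heq : (1 + 4 * ε + (14 / 3) * ε ^ 2) * n / (2 * (1 + 6 * ε)) -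
          (((1 - 6 * ε) / 6) * n + ((1 + 6 * ε) / (4 * n)) * (2 * q ^ 2 + (n - q) ^ 2))
          = ((3 * (1 + 6 * ε) * q - (1 - 4 * ε) * n) *
              (2 * (1 + 6 * ε) * n - 3 * (1 + 6 * ε) * q - (1 - 4 * ε) * n)
             + 2 * (1 - 6 * ε) * (1 + 6 * ε) * n ^ 2) /
            (12 * n * (1 + 6 * ε)) := by
        field_simp
        ring
      rw [heq]
      apply div_nonneg _ (by positivity)
      have h2 : (0:ℝ) ≤ 2 * (1 + 6 * ε) * n - 3 * (1 + 6 * ε) * q - (1 - 4 * ε) * n := by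
        nlinarith
      have h3 : (0:ℝ) ≤ 2 * (1 - 6 * ε) * (1 + 6 * ε) * n ^ 2 := by
        have : (0:ℝ) < 1 - 6 * ε := by linarith
        positivity
      nlinarith [mul_nonneg (by linarith : (0:ℝ) ≤ 3 * (1 + 6 * ε) * q - (1 - 4 * ε) * n) h2]
    · refine le_trans ?_ (le_max_right _ _)
      rw [← sub_nonneg]
      have heq : (17 + 6 * ε) * n / 48 -
          (((1 - 6 * ε) / 6) * n + ((1 + 6 * ε) / (4 * n)) * (2 * q ^ 2 + (n - q) ^ 2))
          = ((1 + 6 * ε) * (n - 2 * q) * (6 * q - n) / 4) / (4 * n) := by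
        field_simp
        ring
      rw [heq]
      apply div_nonneg _ (by linarith)
      have : (0:ℝ) ≤ n - 2 * q := by linarith
      have : (0:ℝ) ≤ 6 * q - n := by linarith
      positivity
  · refine max_lt ?_ (by nlinarith)
    rw [div_lt_iff₀ (by linarith : (0:ℝ) < 2 * (1 + 6 * ε))]
    nlinarith [mul_pos (mul_pos hn hε0) (show (0:ℝ) < 3 / 7 - ε by linarith)]
end

section
/- Let ε ∈ (0, 1/6) and n > 0 be real numbers. (i) For every real q with 0 ≤ q ≤ n/2: (3(1 + 6ε)/(4n))·q² − ((1 + 6ε)/2)·q + ((5 + 6ε)/12)·n ≤ (5 + 6ε)·n/12 = n/2 − (1 − 6ε)·n/12. (ii) For every real q ∈ [0, n] and every real s with 0 ≤ s ≤ 2ε·n/(1 + 6ε)²: (3(1 + 6ε)/(4n))·q² − ((1 + 6ε)/2)·q + ((5 + 6ε)/12)·n − ((1 + 6ε)/(4n))·s² ≥ (1 + 3ε)·n/(3(1 + 6ε)). -/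
/-- Expectation core of the lemma moving the number of undecided agents into
the working interval [(1−4ε)n/(3(1+6ε)), n/2] (p = 1/6 − ε). -/
theorem undecided_into_working_interval
    (ε n : ℝ) (hε0 : 0 < ε) (hε1 : ε < 1 / 6) (hn : 0 < n) :
    (∀ q : ℝ, 0 ≤ q → q ≤ n / 2 →
      (3 * (1 + 6 * ε) / (4 * n)) * q ^ 2 - ((1 + 6 * ε) / 2) * q
          + ((5 + 6 * ε) / 12) * n
        ≤ (5 + 6 * ε) * n / 12
      ∧ (5 + 6 * ε) * n / 12 = n / 2 - (1 - 6 * ε) * n / 12)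
    ∧ (∀ q s : ℝ, 0 ≤ q → q ≤ n → 0 ≤ s → s ≤ 2 * ε * n / (1 + 6 * ε) ^ 2 →
      (3 * (1 + 6 * ε) / (4 * n)) * q ^ 2 - ((1 + 6 * ε) / 2) * q
          + ((5 + 6 * ε) / 12) * n - ((1 + 6 * ε) / (4 * n)) * s ^ 2
        ≥ (1 + 3 * ε) * n / (3 * (1 + 6 * ε))) := by
  have hεpos : (0:ℝ) < 1 + 6 * ε := by linarith
  constructor
  · intro q hq0 hq
    constructor
    · have key : (3 * (1 + 6 * ε) / (4 * n)) * q ^ 2 ≤ ((1 + 6 * ε) / 2) * q := by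
        rw [div_mul_eq_mul_div, div_le_iff₀ (by positivity : (0:ℝ) < 4 * n)]
        nlinarith [mul_nonneg (mul_nonneg hεpos.le hq0) (by linarith : 0 ≤ n - 2 * q)]
      linarith
    · ring
  · intro q s hq0 hq hs0 hs
    have hsq : s ^ 2 ≤ (2 * ε * n / (1 + 6 * ε) ^ 2) ^ 2 := by
      have := pow_le_pow_left₀ hs0 hs 2
      simpa using this
    have h1 : (3 * (1 + 6 * ε) / (4 * n)) * q ^ 2 - ((1 + 6 * ε) / 2) * q
          + ((5 + 6 * ε) / 12) * n
        = (3 * (1 + 6 * ε) / (4 * n)) * (q - n / 3) ^ 2 + n / 3 := by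
      field_simp
      ring
    have h2 : (0:ℝ) ≤ (3 * (1 + 6 * ε) / (4 * n)) * (q - n / 3) ^ 2 := by positivity
    have h3 : ((1 + 6 * ε) / (4 * n)) * s ^ 2
        ≤ ((1 + 6 * ε) / (4 * n)) * (2 * ε * n / (1 + 6 * ε) ^ 2) ^ 2 := by
      apply mul_le_mul_of_nonneg_left hsq (by positivity)
    have h4 : ((1 + 6 * ε) / (4 * n)) * (2 * ε * n / (1 + 6 * ε) ^ 2) ^ 2
        = ε ^ 2 * n / (1 + 6 * ε) ^ 3 := by
      field_simp
      ring
    have h5 : n / 3 - ε ^ 2 * n / (1 + 6 * ε) ^ 3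
        ≥ (1 + 3 * ε) * n / (3 * (1 + 6 * ε)) := by
      have heq : n / 3 - ε ^ 2 * n / (1 + 6 * ε) ^ 3
          - (1 + 3 * ε) * n / (3 * (1 + 6 * ε))
          = ε * n * ((1 + 6 * ε) ^ 2 - ε) / (1 + 6 * ε) ^ 3 := by
        field_simp
        ring
      have hpos : (0:ℝ) ≤ ε * n * ((1 + 6 * ε) ^ 2 - ε) / (1 + 6 * ε) ^ 3 := by
        apply div_nonneg _ (by positivity)
        apply mul_nonneg (by positivity)
        nlinarith
      linarith [heq ▸ hpos]
    linarith [h3, h4 ▸ h3]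
end

section
/- Let ε ∈ (0, 1/6) and n > 0 be real numbers, and let q be a real number with n/2 ≤ q ≤ n. Then (3(1 + 6ε)/(4n))·q² − ((1 + 6ε)/2)·q + ((5 + 6ε)/12)·n ≤ q·(5/6 + ε) − (1 − 6ε)·n/48. -/
/-- Quantitative core of the lemma showing that when more than half the
agents are undecided, their expected number decreases by a constant factor
(p = 1/6 − ε). -/
theorem undecided_decrease_above_half
    (ε n q : ℝ) (hε0 : 0 < ε) (hε1 : ε < 1 / 6) (hn : 0 < n)
    (hq0 : n / 2 ≤ q) (hq1 : q ≤ n) :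
    (3 * (1 + 6 * ε) / (4 * n)) * q ^ 2 - ((1 + 6 * ε) / 2) * q
        + ((5 + 6 * ε) / 12) * n
      ≤ q * (5 / 6 + ε) - (1 - 6 * ε) * n / 48 := by
  rw [div_mul_eq_mul_div]
  rw [show ∀ A D B C E : ℝ, (A - B + C ≤ D - E) ↔ (A ≤ D - E - C + B) from
    fun _ _ _ _ _ => by constructor <;> intro <;> linarith]
  rw [div_le_iff₀ (by linarith : (0:ℝ) < 4 * n)]
  nlinarith [mul_nonneg hε0.le (sub_nonneg.2 hq1), sq_nonneg (n - q), sq_nonneg (2*q - n), mul_nonneg hε0.le (sq_nonneg (2*q-n)), mul_nonneg hε0.le (sq_nonneg (n-q))]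
end
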